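/- arXiv:2007.09840 — 4 statements merged into one kernel-verified Lean document; each statement's English description precedes it below -/
import Mathlib

section
/- Let n ≥ 1, 1 ≤ p₁ < ∞ and 0 ≤ μ₁ < n. If φ ∈ L¹(ℝⁿ) and g ∈ M_{p₁,μ₁}(ℝⁿ), then the convolution φ ∗ g belongs to M_{p₁,μ₁}(ℝⁿ) and ‖φ ∗ g‖_{p₁,μ₁} ≤ ‖φ‖_{L¹} ‖g‖_{p₁,μ₁} (Young's inequality for convolution in Morrey spaces). -/
/-!
Weighting by `|φ|`, Hölder's inequality gives the pointwise Jensen bound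
`|φ ∗ g (x)|^p ≤ ‖φ‖₁^(p-1) ∫ |φ(y)| |g(x - y)|^p dy`. Integrating over a ball `B_d(x₀)` and
swapping the integrals by Tonelli leaves `∫ |φ(y)| ‖g‖^p_{L^p(B_d(x₀ - y))} dy`, and every
translated ball obeys the same Morrey bound `‖g‖_{L^p(B_d(x₀ - y))} ≤ d^(μ/p) ‖g‖_{p,μ}`.
-/

open MeasureTheory ENNReal

noncomputable section

abbrev En (n : ℕ) := EuclideanSpace ℝ (Fin n)

/-- The homogeneous Morrey norm `‖f‖_{q,μ} = sup_{x₀, d>0} d^{-μ/q} ‖f‖_{L^q(B_d(x₀))}`. -/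
noncomputable def morreyNorm {n : ℕ} {F : Type*} [NormedAddCommGroup F]
    (q μ : ℝ) (f : En n → F) : ℝ≥0∞ :=
  ⨆ (x₀ : En n) (d : ℝ) (_ : 0 < d),
    ENNReal.ofReal (d ^ (-(μ / q))) *
      eLpNorm f (ENNReal.ofReal q) (volume.restrict (Metric.ball x₀ d))

theorem ENNReal.rpow_lintegral_mul_le_lintegral_mul_rpow {α : Type*} [MeasurableSpace α]
    {μ : Measure α} {p : ℝ} (hp : 1 ≤ p) {w u : α → ℝ≥0∞} (hw : AEMeasurable w μ)
    (hu : AEMeasurable u μ) :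
    (∫⁻ a, w a * u a ∂μ) ^ p ≤ (∫⁻ a, w a ∂μ) ^ (p - 1) * ∫⁻ a, w a * u a ^ p ∂μ := by
  have hp0 : 0 < p := zero_lt_one.trans_le hp
  have hinv : 0 ≤ 1 - 1 / p := sub_nonneg.2 ((div_le_one hp0).2 hp)
  -- Hölder with weights `1/p` and `1 - 1/p` for the splitting `w u = (w u^p)^(1/p) w^(1 - 1/p)`.
  have split : ∀ a, (w a * u a ^ p) ^ (1 / p) * w a ^ (1 - 1 / p) = w a * u a := fun a => by
    rw [mul_rpow_of_nonneg _ _ (by positivity), ← rpow_mul, mul_one_div_cancel hp0.ne', rpow_one,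
      mul_right_comm, ← rpow_add_of_nonneg _ _ (by positivity) hinv, add_sub_cancel, rpow_one]
  have holder := lintegral_mul_norm_pow_le (f := fun a => w a * u a ^ p)
    (hw.mul (hu.pow_const p)) hw (by positivity) hinv (add_sub_cancel _ _)
  simp only [split] at holder
  calc (∫⁻ a, w a * u a ∂μ) ^ p
      ≤ ((∫⁻ a, w a * u a ^ p ∂μ) ^ (1 / p) * (∫⁻ a, w a ∂μ) ^ (1 - 1 / p)) ^ p := by gcongr
    _ = (∫⁻ a, w a ∂μ) ^ (p - 1) * ∫⁻ a, w a * u a ^ p ∂μ := by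
      rw [mul_rpow_of_nonneg _ _ hp0.le, ← rpow_mul, ← rpow_mul, one_div_mul_cancel hp0.ne',
        rpow_one, sub_mul, one_div_mul_cancel hp0.ne', one_mul, mul_comm]

theorem eLpNorm_ofReal_rpow_eq_lintegral {α F : Type*} [MeasurableSpace α] [NormedAddCommGroup F]
    {μ : Measure α} {p : ℝ} (hp : 0 < p) (f : α → F) :
    eLpNorm f (ENNReal.ofReal p) μ ^ p = ∫⁻ a, ‖f a‖ₑ ^ p ∂μ := by
  have h := eLpNorm_nnreal_pow_eq_lintegral (f := f) (μ := μ) (p := p.toNNReal) (by simpa using hp)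
  rwa [Real.coe_toNNReal _ hp.le] at h

section Convolution

variable {G 𝕜 : Type*} [MeasurableSpace G] [AddGroup G] [MeasurableAdd₂ G] [MeasurableNeg G]
  [RCLike 𝕜] {ν : Measure G} [SFinite ν] [ν.IsAddLeftInvariant] {φ g : G → 𝕜}

theorem setLIntegral_rpow_enorm_convolution_le (s : Set G) {p : ℝ} (hp : 1 ≤ p)
    (hφ : AEStronglyMeasurable φ ν) (hg : AEStronglyMeasurable g ν) :
    ∫⁻ x in s, ‖∫ y, φ y * g (x - y) ∂ν‖ₑ ^ p ∂ν ≤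
      (∫⁻ y, ‖φ y‖ₑ ∂ν) ^ (p - 1) * ∫⁻ y, ‖φ y‖ₑ * ∫⁻ x in s, ‖g (x - y)‖ₑ ^ p ∂ν ∂ν := by
  have hg_sub : AEMeasurable (fun z : G × G => ‖g (z.1 - z.2)‖ₑ) ((ν.restrict s).prod ν) :=
    (hg.comp_quasiMeasurePreserving ((quasiMeasurePreserving_sub ν ν).mono_left
      (Measure.restrict_le_self.absolutelyContinuous.prod .rfl))).enorm
  have hprod : AEMeasurable (Function.uncurry fun x y => ‖φ y‖ₑ * ‖g (x - y)‖ₑ ^ p)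
      ((ν.restrict s).prod ν) :=
    (hφ.enorm.comp_quasiMeasurePreserving Measure.quasiMeasurePreserving_snd).mul
      (hg_sub.pow_const p)
  calc ∫⁻ x in s, ‖∫ y, φ y * g (x - y) ∂ν‖ₑ ^ p ∂ν
      ≤ ∫⁻ x in s, (∫⁻ y, ‖φ y‖ₑ * ‖g (x - y)‖ₑ ∂ν) ^ p ∂ν := by
        gcongr with x
        simpa only [enorm_mul] using enorm_integral_le_lintegral_enorm (fun y => φ y * g (x - y))
    _ ≤ ∫⁻ x in s, (∫⁻ y, ‖φ y‖ₑ ∂ν) ^ (p - 1) * ∫⁻ y, ‖φ y‖ₑ * ‖g (x - y)‖ₑ ^ p ∂ν ∂ν := by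
        gcongr with x
        exact rpow_lintegral_mul_le_lintegral_mul_rpow hp hφ.enorm
          (hg.comp_quasiMeasurePreserving (quasiMeasurePreserving_sub_left ν x)).enorm
    _ = (∫⁻ y, ‖φ y‖ₑ ∂ν) ^ (p - 1) * ∫⁻ y, ‖φ y‖ₑ * ∫⁻ x in s, ‖g (x - y)‖ₑ ^ p ∂ν ∂ν := by
        rw [lintegral_const_mul'' _ (f := fun x => ∫⁻ y, ‖φ y‖ₑ * ‖g (x - y)‖ₑ ^ p ∂ν)
          hprod.lintegral_prod_right', lintegral_lintegral_swap hprod]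
        simp only [lintegral_const_mul' _ _ enorm_ne_top]

theorem eLpNorm_restrict_convolution_le (s : Set G) {p : ℝ} (hp : 1 ≤ p)
    (hφ : AEStronglyMeasurable φ ν) (hg : AEStronglyMeasurable g ν) {B : ℝ≥0∞}
    (hB : ∀ y, eLpNorm (fun x => g (x - y)) (ENNReal.ofReal p) (ν.restrict s) ≤ B) :
    eLpNorm (fun x => ∫ y, φ y * g (x - y) ∂ν) (ENNReal.ofReal p) (ν.restrict s) ≤
      eLpNorm φ 1 ν * B := by
  have hp0 : 0 < p := zero_lt_one.trans_le hp
  rw [← rpow_le_rpow_iff hp0, eLpNorm_ofReal_rpow_eq_lintegral hp0, eLpNorm_one_eq_lintegral_enorm]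
  set A := ∫⁻ y, ‖φ y‖ₑ ∂ν
  calc ∫⁻ x in s, ‖∫ y, φ y * g (x - y) ∂ν‖ₑ ^ p ∂ν
      ≤ A ^ (p - 1) * ∫⁻ y, ‖φ y‖ₑ * ∫⁻ x in s, ‖g (x - y)‖ₑ ^ p ∂ν ∂ν :=
        setLIntegral_rpow_enorm_convolution_le s hp hφ hg
    _ ≤ A ^ (p - 1) * ∫⁻ y, ‖φ y‖ₑ * B ^ p ∂ν := by
        gcongr with y
        rw [← eLpNorm_ofReal_rpow_eq_lintegral hp0 (fun x => g (x - y))]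
        gcongr
        exact hB y
    _ = (A * B) ^ p := by
        have hA : A ^ (p - 1) * A = A ^ p := by
          conv_rhs => rw [← sub_add_cancel p 1, rpow_add_of_nonneg _ _ (by linarith) zero_le_one,
            rpow_one]
        rw [lintegral_mul_const'' _ hφ.enorm, ← mul_assoc, hA, mul_rpow_of_nonneg _ _ hp0.le]

end Convolution

theorem eLpNorm_comp_sub_restrict_ball {G F : Type*} [NormedAddCommGroup G] [MeasurableSpace G]
    [BorelSpace G] [NormedAddCommGroup F] {ν : Measure G} [ν.IsAddRightInvariant] {g : G → F}
    (hg : AEStronglyMeasurable g ν) (p : ℝ≥0∞) (x₀ y : G) (d : ℝ) :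
    eLpNorm (fun x => g (x - y)) p (ν.restrict (Metric.ball x₀ d)) =
      eLpNorm g p (ν.restrict (Metric.ball (x₀ - y) d)) := by
  have hball : (fun x => x - y) ⁻¹' Metric.ball (x₀ - y) d = Metric.ball x₀ d := by
    ext x
    simp
  have hsub := (measurePreserving_sub_right ν y).restrict_preimage (s := Metric.ball (x₀ - y) d)
    measurableSet_ball
  rw [hball] at hsub
  exact eLpNorm_comp_measurePreserving hg.restrict hsub

theorem ENNReal.ofReal_rpow_neg_mul_ofReal_rpow {d : ℝ} (hd : 0 < d) (a : ℝ) :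
    ENNReal.ofReal (d ^ (-a)) * ENNReal.ofReal (d ^ a) = 1 := by
  rw [← ofReal_mul (by positivity), ← Real.rpow_add hd, neg_add_cancel, Real.rpow_zero, ofReal_one]

theorem morreyNorm_le_iff {n : ℕ} {F : Type*} [NormedAddCommGroup F] {q μ : ℝ} {f : En n → F}
    {C : ℝ≥0∞} :
    morreyNorm q μ f ≤ C ↔ ∀ (x₀ : En n) (d : ℝ), 0 < d →
      ENNReal.ofReal (d ^ (-(μ / q))) *
        eLpNorm f (ENNReal.ofReal q) (volume.restrict (Metric.ball x₀ d)) ≤ C := by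
  simp only [morreyNorm, iSup_le_iff]

theorem eLpNorm_restrict_ball_le_morreyNorm {n : ℕ} {F : Type*} [NormedAddCommGroup F]
    (q μ : ℝ) (f : En n → F) (x₀ : En n) {d : ℝ} (hd : 0 < d) :
    eLpNorm f (ENNReal.ofReal q) (volume.restrict (Metric.ball x₀ d)) ≤
      ENNReal.ofReal (d ^ (μ / q)) * morreyNorm q μ f := by
  calc eLpNorm f (ENNReal.ofReal q) (volume.restrict (Metric.ball x₀ d))
      = ENNReal.ofReal (d ^ (μ / q)) * (ENNReal.ofReal (d ^ (-(μ / q))) *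
          eLpNorm f (ENNReal.ofReal q) (volume.restrict (Metric.ball x₀ d))) := by
        rw [mul_left_comm, ← mul_assoc, ofReal_rpow_neg_mul_ofReal_rpow hd, one_mul]
    _ ≤ ENNReal.ofReal (d ^ (μ / q)) * morreyNorm q μ f := by
        gcongr
        exact morreyNorm_le_iff.1 le_rfl x₀ d hd

theorem morrey_young_general {n : ℕ} (p₁ μ₁ : ℝ) (hp₁ : 1 ≤ p₁)
    (φ g : En n → ℂ)
    (hφ : Integrable φ volume)
    (hgm : AEStronglyMeasurable g volume)
    (hg : morreyNorm p₁ μ₁ g < ⊤) :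
    morreyNorm p₁ μ₁ (fun x => ∫ y : En n, φ y * g (x - y)) < ⊤ ∧
      morreyNorm p₁ μ₁ (fun x => ∫ y : En n, φ y * g (x - y)) ≤
        eLpNorm φ 1 volume * morreyNorm p₁ μ₁ g := by
  have hle : morreyNorm p₁ μ₁ (fun x => ∫ y : En n, φ y * g (x - y)) ≤
      eLpNorm φ 1 volume * morreyNorm p₁ μ₁ g := by
    refine morreyNorm_le_iff.2 fun x₀ d hd => ?_
    have hconv := eLpNorm_restrict_convolution_le (Metric.ball x₀ d) hp₁
      hφ.aestronglyMeasurable hgm fun y => by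
      rw [eLpNorm_comp_sub_restrict_ball hgm]
      exact eLpNorm_restrict_ball_le_morreyNorm p₁ μ₁ g (x₀ - y) hd
    calc ENNReal.ofReal (d ^ (-(μ₁ / p₁))) *
          eLpNorm (fun x => ∫ y, φ y * g (x - y)) (ENNReal.ofReal p₁)
            (volume.restrict (Metric.ball x₀ d))
        ≤ ENNReal.ofReal (d ^ (-(μ₁ / p₁))) *
            (eLpNorm φ 1 volume * (ENNReal.ofReal (d ^ (μ₁ / p₁)) * morreyNorm p₁ μ₁ g)) := by
          gcongr
      _ = eLpNorm φ 1 volume * morreyNorm p₁ μ₁ g := by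
          rw [mul_left_comm, ← mul_assoc (ENNReal.ofReal _), ofReal_rpow_neg_mul_ofReal_rpow hd,
            one_mul]
  exact ⟨hle.trans_lt (mul_lt_top (memLp_one_iff_integrable.2 hφ).eLpNorm_lt_top hg), hle⟩

/-- Young's inequality for convolution in Morrey spaces:
if `φ ∈ L¹(ℝⁿ)` and `g ∈ M_{p₁,μ₁}(ℝⁿ)`, then
`‖φ ∗ g‖_{p₁,μ₁} ≤ ‖φ‖_{L¹} ‖g‖_{p₁,μ₁}`. -/
theorem morrey_young {n : ℕ} (hn : 1 ≤ n) (p₁ μ₁ : ℝ)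
    (hp₁ : 1 ≤ p₁) (hμ₁ : 0 ≤ μ₁) (hμ₁' : μ₁ < n)
    (φ g : En n → ℂ)
    (hφ : Integrable φ volume)
    (hgm : AEStronglyMeasurable g volume)
    (hg : morreyNorm p₁ μ₁ g < ⊤) :
    morreyNorm p₁ μ₁ (fun x => ∫ y : En n, φ y * g (x - y)) < ⊤ ∧
      morreyNorm p₁ μ₁ (fun x => ∫ y : En n, φ y * g (x - y)) ≤
        eLpNorm φ 1 volume * morreyNorm p₁ μ₁ g :=
  morrey_young_general p₁ μ₁ hp₁ φ g hφ hgm hg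

end
end

section
/- Let n ≥ 1, 1 ≤ p₂ ≤ p₁ < ∞ and 0 ≤ μ₁, μ₂ < n be such that (n − μ₁)/p₁ ≤ (n − μ₂)/p₂, let β be a multi-index and A > 0. Then there is a constant C > 0, depending only on n, A, β, p₁, p₂, μ₁, μ₂ and independent of j and g, such that for every j ∈ ℤ and every g ∈ M_{p₁,μ₁}(ℝⁿ) whose support is contained in {ξ ∈ ℝⁿ : |ξ| ≤ A·2^j}, one has the Bernstein-type inequality ‖ξ^β g‖_{p₂,μ₂} ≤ C · 2^{j|β| + j((n−μ₂)/p₂ − (n−μ₁)/p₁)} ‖g‖_{p₁,μ₁}. (Applied in the paper with g = f̂ for f with supp f̂ ⊂ {|ξ| ≤ A·2^j}.) -/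
open MeasureTheory ENNReal

noncomputable section

/-!
On the support of `g` the multiplier `ξ^β` is bounded by `R^|β|`, `R = A·2^j`, so it suffices
to compare the `(p₂, μ₂)` and `(p₁, μ₁)` Morrey norms of a function supported in `B_{2R}(0)`.
On a ball `B_d`, Hölder's inequality trades `L^{p₂}` for `L^{p₁}` at the cost of
`|B_d|^{1/p₂ - 1/p₁}`, which turns the weight `d^{-μ₂/p₂}` into
`d^{(n-μ₂)/p₂ - (n-μ₁)/p₁} d^{-μ₁/p₁}`. The excess power of `d` is at most
`(2R)^{(n-μ₂)/p₂ - (n-μ₁)/p₁}` when `d ≤ 2R`, and a larger ball sees no more of the function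
than `B_{2R}(0)` while carrying a smaller weight.
-/

open Metric

section Morrey

variable {n : ℕ} {F G : Type*} [NormedAddCommGroup F] [NormedAddCommGroup G]

def morreyBallNorm (q μ : ℝ) (f : En n → F) (x₀ : En n) (d : ℝ) : ℝ≥0∞ :=
  ENNReal.ofReal (d ^ (-(μ / q))) * eLpNorm f (ENNReal.ofReal q) (volume.restrict (ball x₀ d))

theorem morreyBallNorm_le_morreyNorm (q μ : ℝ) (f : En n → F) (x₀ : En n) {d : ℝ}
    (hd : 0 < d) : morreyBallNorm q μ f x₀ d ≤ morreyNorm q μ f :=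
  le_iSup₂_of_le x₀ d (le_iSup_of_le hd le_rfl)

theorem morreyNorm_le {q μ : ℝ} {f : En n → F} {M : ℝ≥0∞}
    (h : ∀ x₀ d, 0 < d → morreyBallNorm q μ f x₀ d ≤ M) : morreyNorm q μ f ≤ M :=
  iSup₂_le fun x₀ d => iSup_le (h x₀ d)

theorem morreyNorm_le_mul_of_norm_le {q μ c : ℝ} {f : En n → F} {g : En n → G}
    (h : ∀ x, ‖f x‖ ≤ c * ‖g x‖) : morreyNorm q μ f ≤ ENNReal.ofReal c * morreyNorm q μ g :=
  morreyNorm_le fun x₀ d hd =>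
    calc morreyBallNorm q μ f x₀ d
        ≤ ENNReal.ofReal (d ^ (-(μ / q))) *
            (ENNReal.ofReal c * eLpNorm g (ENNReal.ofReal q) (volume.restrict (ball x₀ d))) := by
          grw [morreyBallNorm, eLpNorm_le_mul_eLpNorm_of_ae_le_mul (.of_forall h)]
      _ = ENNReal.ofReal c * morreyBallNorm q μ g x₀ d := by
          rw [morreyBallNorm, mul_left_comm]
      _ ≤ ENNReal.ofReal c * morreyNorm q μ g := by
          grw [morreyBallNorm_le_morreyNorm q μ g x₀ hd]

end Morrey

theorem norm_prod_coord_pow_le {n : ℕ} (ξ : En n) (β : Fin n → ℕ) :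
    ‖∏ i, ((ξ i : ℝ) : ℂ) ^ β i‖ ≤ ‖ξ‖ ^ ∑ i, β i := by
  rw [norm_prod, ← Finset.prod_pow_eq_pow_sum]
  gcongr with i
  rw [norm_pow, Complex.norm_real]
  exact pow_le_pow_left₀ (norm_nonneg _) (PiLp.norm_apply_le ξ i) _

theorem eLpNorm_restrict_ball_le {n : ℕ} {F : Type*} [NormedAddCommGroup F] {f : En n → F}
    (hf : AEStronglyMeasurable f volume) {p q : ℝ} (hp : 0 < p) (hpq : p ≤ q)
    (x₀ : En n) {d : ℝ} (hd : 0 < d) :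
    eLpNorm f (ENNReal.ofReal p) (volume.restrict (ball x₀ d)) ≤
      ENNReal.ofReal ((volume.real (ball (0 : En n) 1) * d ^ n) ^ (1 / p - 1 / q)) *
        eLpNorm f (ENNReal.ofReal q) (volume.restrict (ball x₀ d)) := by
  have hvol : volume (ball x₀ d) = ENNReal.ofReal (volume.real (ball (0 : En n) 1) * d ^ n) := by
    rw [Measure.addHaar_ball_of_pos volume x₀ hd, finrank_euclideanSpace_fin, measureReal_def,
      ENNReal.ofReal_mul (by positivity), ENNReal.ofReal_toReal measure_ball_lt_top.ne, mul_comm]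
  have holder := eLpNorm_le_eLpNorm_mul_rpow_measure_univ (ENNReal.ofReal_le_ofReal hpq)
    (hf.restrict (s := ball x₀ d))
  rwa [Measure.restrict_apply_univ, hvol, ENNReal.toReal_ofReal hp.le,
    ENNReal.toReal_ofReal (hp.trans_le hpq).le, ENNReal.ofReal_rpow_of_nonneg (by positivity)
    (sub_nonneg.2 (one_div_le_one_div_of_le hp hpq)), mul_comm] at holder

section Embedding

variable {n : ℕ} {F : Type*} [NormedAddCommGroup F] {f : En n → F} {p₁ p₂ μ₁ μ₂ : ℝ}

theorem morreyBallNorm_le_of_exponent_le (hf : AEStronglyMeasurable f volume) (hp₂ : 0 < p₂)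
    (hp : p₂ ≤ p₁) (x₀ : En n) {d : ℝ} (hd : 0 < d) :
    morreyBallNorm p₂ μ₂ f x₀ d ≤
      ENNReal.ofReal (volume.real (ball (0 : En n) 1) ^ (1 / p₂ - 1 / p₁) *
          d ^ ((n - μ₂) / p₂ - (n - μ₁) / p₁)) * morreyBallNorm p₁ μ₁ f x₀ d := by
  set ω := volume.real (ball (0 : En n) 1)
  have scaling : d ^ (-(μ₂ / p₂)) * (ω * d ^ n) ^ (1 / p₂ - 1 / p₁) =
      ω ^ (1 / p₂ - 1 / p₁) * d ^ ((n - μ₂) / p₂ - (n - μ₁) / p₁) * d ^ (-(μ₁ / p₁)) := by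
    rw [Real.mul_rpow measureReal_nonneg (by positivity), ← Real.rpow_natCast d n,
      ← Real.rpow_mul hd.le, mul_left_comm, mul_assoc, ← Real.rpow_add hd, ← Real.rpow_add hd]
    congr 2
    field_simp
    ring
  calc morreyBallNorm p₂ μ₂ f x₀ d
      ≤ ENNReal.ofReal (d ^ (-(μ₂ / p₂))) *
          (ENNReal.ofReal ((ω * d ^ n) ^ (1 / p₂ - 1 / p₁)) *
            eLpNorm f (ENNReal.ofReal p₁) (volume.restrict (ball x₀ d))) := by
        grw [morreyBallNorm, eLpNorm_restrict_ball_le hf hp₂ hp x₀ hd]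
    _ = ENNReal.ofReal (ω ^ (1 / p₂ - 1 / p₁) * d ^ ((n - μ₂) / p₂ - (n - μ₁) / p₁)) *
          morreyBallNorm p₁ μ₁ f x₀ d := by
        rw [morreyBallNorm, ← mul_assoc, ← mul_assoc, ← ENNReal.ofReal_mul (by positivity),
          scaling, ENNReal.ofReal_mul (by positivity)]

theorem morreyBallNorm_le_of_support_subset {q μ r d : ℝ} (hμq : 0 ≤ μ / q) (hr : 0 < r)
    (hrd : r ≤ d) (hsupp : Function.support f ⊆ ball 0 r) (x₀ : En n) :
    morreyBallNorm q μ f x₀ d ≤ morreyBallNorm q μ f 0 r := by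
  unfold morreyBallNorm
  gcongr 1
  · exact ENNReal.ofReal_le_ofReal <| Real.rpow_le_rpow_of_nonpos hr hrd (neg_nonpos.2 hμq)
  · rw [eLpNorm_restrict_eq_of_support_subset hsupp]
    exact eLpNorm_mono_measure _ Measure.restrict_le_self

theorem morreyNorm_le_of_support_subset_ball (hf : AEStronglyMeasurable f volume)
    (hp₂ : 0 < p₂) (hp : p₂ ≤ p₁) (hμ₂ : 0 ≤ μ₂) (hreg : (n - μ₁) / p₁ ≤ (n - μ₂) / p₂)
    {r : ℝ} (hr : 0 < r) (hsupp : Function.support f ⊆ ball 0 r) :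
    morreyNorm p₂ μ₂ f ≤
      ENNReal.ofReal (volume.real (ball (0 : En n) 1) ^ (1 / p₂ - 1 / p₁) *
          r ^ ((n - μ₂) / p₂ - (n - μ₁) / p₁)) * morreyNorm p₁ μ₁ f := by
  have small_ball : ∀ x₀ d, 0 < d → d ≤ r → morreyBallNorm p₂ μ₂ f x₀ d ≤
      ENNReal.ofReal (volume.real (ball (0 : En n) 1) ^ (1 / p₂ - 1 / p₁) *
          r ^ ((n - μ₂) / p₂ - (n - μ₁) / p₁)) * morreyNorm p₁ μ₁ f := fun x₀ d hd hdr => by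
    grw [morreyBallNorm_le_of_exponent_le hf hp₂ hp x₀ hd,
      morreyBallNorm_le_morreyNorm p₁ μ₁ f x₀ hd,
      Real.rpow_le_rpow hd.le hdr (sub_nonneg.2 hreg)]
  refine morreyNorm_le fun x₀ d hd => ?_
  rcases le_or_gt d r with hdr | hrd
  · exact small_ball x₀ d hd hdr
  · grw [morreyBallNorm_le_of_support_subset (by positivity) hr hrd.le hsupp x₀]
    exact small_ball 0 r hr le_rfl

end Embedding

theorem morrey_bernstein_general {n : ℕ} (p₁ p₂ μ₁ μ₂ : ℝ)
    (hp₂ : 1 ≤ p₂) (hp : p₂ ≤ p₁)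
    (hμ₂ : 0 ≤ μ₂)
    (hreg : (n - μ₁) / p₁ ≤ (n - μ₂) / p₂)
    (β : Fin n → ℕ) (A : ℝ) (hA : 0 < A) :
    ∃ C > (0 : ℝ), ∀ (j : ℤ) (g : En n → ℂ),
      AEStronglyMeasurable g volume →
      morreyNorm p₁ μ₁ g < ⊤ →
      (∀ ξ : En n, g ξ ≠ 0 → ‖ξ‖ ≤ A * 2 ^ j) →
      morreyNorm p₂ μ₂ (fun ξ => (∏ i, ((ξ i : ℝ) : ℂ) ^ β i) * g ξ) ≤
        ENNReal.ofReal
          (C * (2 : ℝ) ^ ((j : ℝ) * (∑ i, (β i : ℝ)) +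
            (j : ℝ) * ((n - μ₂) / p₂ - (n - μ₁) / p₁))) *
          morreyNorm p₁ μ₁ g := by
  set ω := volume.real (ball (0 : En n) 1)
  set θ := 1 / p₂ - 1 / p₁
  set e := ((n : ℝ) - μ₂) / p₂ - (n - μ₁) / p₁
  have hω : 0 < ω :=
    ENNReal.toReal_pos (measure_ball_pos volume 0 one_pos).ne' measure_ball_lt_top.ne
  set k := ∑ i, β i with hk
  refine ⟨A ^ k * ω ^ θ * (2 * A) ^ e, by positivity, fun j g hg _ hsupp => ?_⟩
  set R := A * 2 ^ j
  have hR : 0 < R := by positivity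
  have multiplier : ∀ ξ, ‖(∏ i, ((ξ i : ℝ) : ℂ) ^ β i) * g ξ‖ ≤ R ^ k * ‖g ξ‖ := by
    intro ξ
    by_cases hξ : g ξ = 0
    · simp [hξ]
    · grw [norm_mul, norm_prod_coord_pow_le, hsupp ξ hξ]
  have support_g : Function.support g ⊆ ball 0 (2 * R) := fun ξ hξ => by
    rw [mem_ball_zero_iff]
    linarith [hsupp ξ hξ]
  have constant : R ^ k * (ω ^ θ * (2 * R) ^ e) =
      A ^ k * ω ^ θ * (2 * A) ^ e * 2 ^ ((j : ℝ) * ∑ i, (β i : ℝ) + j * e) := by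
    have two_pow_j : ∀ t : ℝ, ((2 : ℝ) ^ j) ^ t = 2 ^ ((j : ℝ) * t) := fun t => by
      rw [← Real.rpow_intCast, ← Real.rpow_mul zero_le_two]
    have hk_real : ∑ i, (β i : ℝ) = k := by rw [hk]; push_cast; rfl
    rw [hk_real, Real.rpow_add two_pos, ← two_pow_j, ← two_pow_j, Real.rpow_natCast,
      show 2 * R = 2 * A * 2 ^ j by ring, Real.mul_rpow (by positivity) (by positivity)]
    ring
  calc _ ≤ ENNReal.ofReal (R ^ k) * morreyNorm p₂ μ₂ g :=
        morreyNorm_le_mul_of_norm_le multiplier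
    _ ≤ ENNReal.ofReal (R ^ k) *
          (ENNReal.ofReal (ω ^ θ * (2 * R) ^ e) * morreyNorm p₁ μ₁ g) := by
        grw [morreyNorm_le_of_support_subset_ball hg (by linarith) hp hμ₂ hreg (by positivity)
          support_g]
    _ = _ := by
        rw [← mul_assoc, ← ENNReal.ofReal_mul (by positivity), constant]

/-- Bernstein-type inequality in Morrey spaces: if `supp g ⊆ {|ξ| ≤ A·2^j}`, then
`‖ξ^β g‖_{p₂,μ₂} ≤ C 2^{j|β| + j((n−μ₂)/p₂ − (n−μ₁)/p₁)} ‖g‖_{p₁,μ₁}`,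
with `C` independent of `j` and `g`. -/
theorem morrey_bernstein {n : ℕ} (hn : 1 ≤ n) (p₁ p₂ μ₁ μ₂ : ℝ)
    (hp₂ : 1 ≤ p₂) (hp : p₂ ≤ p₁)
    (hμ₁ : 0 ≤ μ₁) (hμ₁' : μ₁ < n) (hμ₂ : 0 ≤ μ₂) (hμ₂' : μ₂ < n)
    (hreg : (n - μ₁) / p₁ ≤ (n - μ₂) / p₂)
    (β : Fin n → ℕ) (A : ℝ) (hA : 0 < A) :
    ∃ C > (0 : ℝ), ∀ (j : ℤ) (g : En n → ℂ),
      AEStronglyMeasurable g volume →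
      morreyNorm p₁ μ₁ g < ⊤ →
      (∀ ξ : En n, g ξ ≠ 0 → ‖ξ‖ ≤ A * 2 ^ j) →
      morreyNorm p₂ μ₂ (fun ξ => (∏ i, ((ξ i : ℝ) : ℂ) ^ β i) * g ξ) ≤
        ENNReal.ofReal
          (C * (2 : ℝ) ^ ((j : ℝ) * (∑ i, (β i : ℝ)) +
            (j : ℝ) * ((n - μ₂) / p₂ - (n - μ₁) / p₁))) *
          morreyNorm p₁ μ₁ g :=
  morrey_bernstein_general p₁ p₂ μ₁ μ₂ hp₂ hp hμ₂ hreg β A hA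

end
end

section
/- Let n ≥ 1, 1 ≤ q < ∞, 0 ≤ μ < n, s ∈ ℝ, and set k := n − s − (n − μ)/q. Let g : ℝⁿ∖{0} → ℂ be a measurable function homogeneous of degree k − n, i.e. g(λξ) = λ^{k−n} g(ξ) for all λ > 0 and all ξ ≠ 0, such that ‖φ·g‖_{q,μ} < ∞. Then for every j ∈ ℤ one has 2^{js} ‖φ_j g‖_{q,μ} = ‖φ g‖_{q,μ}; consequently sup_{j∈ℤ} 2^{js} ‖φ_j g‖_{q,μ} = ‖φ g‖_{q,μ} < ∞, that is, any tempered distribution f with f̂ = g belongs to FN^s_{q,μ,∞}(ℝⁿ). In particular, FN^s_{q,μ,∞}(ℝⁿ) contains functions homogeneous of degree −k with −k = s − n + (n − μ)/q. -/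
/-!
Homogeneity of degree `k - n` makes each dyadic piece a rescaled copy of the first one:
`φ (c • ξ) • g ξ = c ^ (n - k) • (φ • g) (c • ξ)` (at `ξ = 0` both sides vanish because `φ` is
supported in an annulus). Under `ξ ↦ c • ξ` Lebesgue measure scales by `c ^ n` and balls go to
balls of radius scaled by `c`, so the Morrey norm picks up the factor `c ^ ((μ - n) / q)`. For
`c = 2 ^ (-j)` the two factors multiply to `2 ^ (-j s)`, which cancels the weight `2 ^ (j s)`:
all terms of the `ℓ^∞` norm equal `‖φ g‖_{q,μ}`.
-/


open MeasureTheory ENNReal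

noncomputable section

/-- ℓʳ norm over ℤ of a family of extended reals. -/
noncomputable def lrNorm (r : ℝ≥0∞) (a : ℤ → ℝ≥0∞) : ℝ≥0∞ :=
  if r = ⊤ then ⨆ j, a j else (∑' j, a j ^ r.toReal) ^ (1 / r.toReal)

/-- A Littlewood–Paley function: smooth, `0 ≤ φ ≤ 1`, supported in the annulus
`{3/4 ≤ |ξ| ≤ 8/3}`, with `∑_{j∈ℤ} φ(2^{-j}ξ) = 1` for `ξ ≠ 0`. -/
def IsLP {n : ℕ} (φ : En n → ℝ) : Prop :=
  ContDiff ℝ (⊤ : ℕ∞) φ ∧ (∀ ξ, 0 ≤ φ ξ) ∧ (∀ ξ, φ ξ ≤ 1) ∧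
    (∀ ξ, φ ξ ≠ 0 → 3 / 4 ≤ ‖ξ‖ ∧ ‖ξ‖ ≤ 8 / 3) ∧
    ∀ ξ : En n, ξ ≠ 0 → HasSum (fun j : ℤ => φ ((2 : ℝ) ^ (-j) • ξ)) 1

/-- Fourier–Besov–Morrey norm `‖f‖_{FN^s_{q,μ,r}}`, expressed in terms of the Fourier
transform `fhat` of `f`. -/
noncomputable def fbmNorm {n : ℕ} {F : Type*} [NormedAddCommGroup F] [NormedSpace ℝ F]
    (s q μ : ℝ) (r : ℝ≥0∞) (φ : En n → ℝ) (fhat : En n → F) : ℝ≥0∞ :=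
  lrNorm r fun j : ℤ =>
    ENNReal.ofReal ((2 : ℝ) ^ ((j : ℝ) * s)) *
      morreyNorm q μ (fun ξ => φ ((2 : ℝ) ^ (-j) • ξ) • fhat ξ)

open Pointwise

theorem eLpNorm_comp_smul_restrict {E F : Type*} [NormedAddCommGroup E] [NormedSpace ℝ E]
    [MeasurableSpace E] [BorelSpace E] [FiniteDimensional ℝ E] (μ : Measure E)
    [μ.IsAddHaarMeasure] [NormedAddCommGroup F] (f : E → F) {p : ℝ≥0∞} (hp : p ≠ ∞) {c : ℝ} (hc : c ≠ 0) (s : Set E) :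
    eLpNorm (fun x => f (c • x)) p (μ.restrict s) =
      ENNReal.ofReal |(c ^ Module.finrank ℝ E)⁻¹| ^ (1 / p).toReal *
        eLpNorm f p (μ.restrict (c • s)) := by
  have he : MeasurableEmbedding (c • · : E → E) := measurableEmbedding_const_smul₀ hc
  rw [← smul_eq_mul, ← eLpNorm_smul_measure_of_ne_top hp, ← Measure.restrict_smul,
    ← Measure.map_addHaar_smul μ hc, he.restrict_map, Set.preimage_smul₀ hc, inv_smul_smul₀ hc,
    he.eLpNorm_map_measure]
  rfl

theorem iSup_pos_comp_dilation {E α : Type*} [AddCommGroup E] [Module ℝ E] [CompleteLattice α]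
    {c : ℝ} (hc : 0 < c) (F : E → ℝ → α) :
    (⨆ (x : E) (d : ℝ) (_ : 0 < d), F (c • x) (c * d)) =
      ⨆ (x : E) (d : ℝ) (_ : 0 < d), F x d := by
  refine le_antisymm (iSup₂_le fun x d => iSup_le fun hd => ?_)
    (iSup₂_le fun x d => iSup_le fun hd => ?_)
  · exact le_iSup₂_of_le (c • x) (c * d) (le_iSup_of_le (mul_pos hc hd) le_rfl)
  · refine le_iSup₂_of_le (c⁻¹ • x) (c⁻¹ * d) (le_iSup_of_le (by positivity) ?_)
    rw [smul_inv_smul₀ hc.ne', mul_inv_cancel_left₀ hc.ne']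

theorem morreyNorm_comp_smul {n : ℕ} {F : Type*} [NormedAddCommGroup F] {q : ℝ} (hq : 0 < q)
    (μ : ℝ) {c : ℝ} (hc : 0 < c) (f : En n → F) :
    morreyNorm q μ (fun ξ => f (c • ξ)) =
      ENNReal.ofReal (c ^ ((μ - n) / q)) * morreyNorm q μ f := by
  have hfactor : ∀ d : ℝ, 0 < d →
      ENNReal.ofReal (d ^ (-(μ / q))) *
          ENNReal.ofReal |(c ^ n)⁻¹| ^ (1 / ENNReal.ofReal q).toReal =
        ENNReal.ofReal (c ^ ((μ - n) / q)) * ENNReal.ofReal ((c * d) ^ (-(μ / q))) := by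
    intro d hd
    rw [one_div, ENNReal.toReal_inv, ENNReal.toReal_ofReal hq.le,
      ENNReal.ofReal_rpow_of_nonneg (abs_nonneg _) (by positivity),
      ← ENNReal.ofReal_mul (by positivity), ← ENNReal.ofReal_mul (by positivity)]
    congr 1
    rw [abs_of_pos (by positivity), ← Real.rpow_natCast, ← Real.rpow_neg hc.le,
      ← Real.rpow_mul hc.le, Real.mul_rpow hc.le hd.le, ← mul_assoc, ← Real.rpow_add hc]
    ring_nf
  unfold morreyNorm
  simp_rw [ENNReal.mul_iSup]
  conv_rhs => rw [← iSup_pos_comp_dilation hc]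
  refine iSup_congr fun x => iSup_congr fun d => iSup_congr fun hd => ?_
  rw [eLpNorm_comp_smul_restrict _ _ ENNReal.ofReal_ne_top hc.ne', finrank_euclideanSpace_fin,
    smul_ball hc.ne', Real.norm_of_nonneg hc.le, ← mul_assoc, hfactor d hd, mul_assoc]

theorem morreyNorm_const_smul {n : ℕ} {F : Type*} [NormedAddCommGroup F] [NormedSpace ℝ F]
    (q μ a : ℝ) (f : En n → F) :
    morreyNorm q μ (fun ξ => a • f ξ) = ‖a‖ₑ * morreyNorm q μ f := by
  unfold morreyNorm
  simp_rw [ENNReal.mul_iSup]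
  refine iSup_congr fun x => iSup_congr fun d => iSup_congr fun hd => ?_
  rw [← Pi.smul_def, eLpNorm_const_smul, mul_left_comm]

theorem smul_comp_smul_eq_of_homogeneous {E F : Type*} [AddCommGroup E] [Module ℝ E]
    [AddCommGroup F] [Module ℝ F] {φ : E → ℝ} (hφ : φ 0 = 0) {g : E → F} {m : ℝ}
    (hg : ∀ l : ℝ, 0 < l → ∀ ξ : E, ξ ≠ 0 → g (l • ξ) = l ^ m • g ξ) {c : ℝ} (hc : 0 < c) :
    (fun ξ => φ (c • ξ) • g ξ) = fun ξ => c ^ (-m) • (φ (c • ξ) • g (c • ξ)) := by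
  funext ξ
  rcases eq_or_ne ξ 0 with rfl | hξ
  · simp [hφ]
  · rw [hg c hc ξ hξ, smul_comm _ (φ _), smul_smul (c ^ (-m)), ← Real.rpow_add hc,
      neg_add_cancel, Real.rpow_zero, one_smul]

theorem morreyNorm_smul_dilation_of_homogeneous {n : ℕ} {F : Type*} [NormedAddCommGroup F]
    [NormedSpace ℝ F] {q : ℝ} (hq : 0 < q) (μ : ℝ) {φ : En n → ℝ} (hφ : φ 0 = 0) {g : En n → F}
    {m : ℝ} (hg : ∀ l : ℝ, 0 < l → ∀ ξ : En n, ξ ≠ 0 → g (l • ξ) = l ^ m • g ξ) {c : ℝ}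
    (hc : 0 < c) :
    morreyNorm q μ (fun ξ => φ (c • ξ) • g ξ) =
      ENNReal.ofReal (c ^ ((μ - n) / q - m)) * morreyNorm q μ (fun ξ => φ ξ • g ξ) := by
  rw [smul_comp_smul_eq_of_homogeneous hφ hg hc, morreyNorm_const_smul,
    morreyNorm_comp_smul hq μ hc (fun ξ => φ ξ • g ξ), ← mul_assoc,
    Real.enorm_of_nonneg (by positivity), ← ENNReal.ofReal_mul (by positivity),
    ← Real.rpow_add hc, neg_add_eq_sub]

theorem lrNorm_top (a : ℤ → ℝ≥0∞) : lrNorm ⊤ a = ⨆ j, a j := if_pos rfl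

theorem fbm_contains_homogeneous_general {n : ℕ} (q μ s : ℝ)
    (hq : 1 ≤ q)
    (k : ℝ) (hk : k = n - s - (n - μ) / q)
    (φ : En n → ℝ) (hφ : IsLP φ)
    (g : En n → ℂ)
    (hhom : ∀ l : ℝ, 0 < l → ∀ ξ : En n, ξ ≠ 0 →
      g (l • ξ) = (l ^ (k - n) : ℝ) • g ξ)
    (hfin : morreyNorm q μ (fun ξ => φ ξ • g ξ) < ⊤) :
    (∀ j : ℤ,
      ENNReal.ofReal ((2 : ℝ) ^ ((j : ℝ) * s)) *
          morreyNorm q μ (fun ξ => φ ((2 : ℝ) ^ (-j) • ξ) • g ξ) =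
        morreyNorm q μ (fun ξ => φ ξ • g ξ)) ∧
    fbmNorm s q μ ⊤ φ g = morreyNorm q μ (fun ξ => φ ξ • g ξ) ∧
    fbmNorm s q μ ⊤ φ g < ⊤ := by
  have hφ0 : φ 0 = 0 := by
    by_contra h0
    have h := (hφ.2.2.2.1 0 h0).1
    norm_num at h
  have hexp : (μ - n) / q - (k - n) = s := by rw [hk]; ring
  have hterm : ∀ j : ℤ, ENNReal.ofReal ((2 : ℝ) ^ ((j : ℝ) * s)) *
      morreyNorm q μ (fun ξ => φ ((2 : ℝ) ^ (-j) • ξ) • g ξ) =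
        morreyNorm q μ (fun ξ => φ ξ • g ξ) := by
    intro j
    rw [morreyNorm_smul_dilation_of_homogeneous (by linarith) μ hφ0 hhom (zpow_pos two_pos (-j)),
      hexp, ← mul_assoc, ← ENNReal.ofReal_mul (by positivity), ← Real.rpow_intCast,
      ← Real.rpow_mul zero_le_two, ← Real.rpow_add two_pos]
    simp
  have hsup : fbmNorm s q μ ⊤ φ g = morreyNorm q μ (fun ξ => φ ξ • g ξ) := by
    rw [fbmNorm, lrNorm_top, iSup_congr hterm, iSup_const]
  exact ⟨hterm, hsup, hsup ▸ hfin⟩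

/-- `FN^s_{q,μ,∞}` contains homogeneous functions of degree `−k = s − n + (n−μ)/q`:
if `g` (the Fourier transform of such a function) is homogeneous of degree `k − n` with
`k = n − s − (n−μ)/q` and `‖φ g‖_{q,μ} < ∞`, then `2^{js}‖φ_j g‖_{q,μ} = ‖φ g‖_{q,μ}`
for all `j`, and `‖f‖_{FN^s_{q,μ,∞}} = ‖φ g‖_{q,μ} < ∞`. -/
theorem fbm_contains_homogeneous {n : ℕ} (hn : 1 ≤ n) (q μ s : ℝ)
    (hq : 1 ≤ q) (hμ : 0 ≤ μ) (hμ' : μ < n)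
    (k : ℝ) (hk : k = n - s - (n - μ) / q)
    (φ : En n → ℝ) (hφ : IsLP φ)
    (g : En n → ℂ) (hgm : AEStronglyMeasurable g volume)
    (hhom : ∀ l : ℝ, 0 < l → ∀ ξ : En n, ξ ≠ 0 →
      g (l • ξ) = (l ^ (k - n) : ℝ) • g ξ)
    (hfin : morreyNorm q μ (fun ξ => φ ξ • g ξ) < ⊤) :
    (∀ j : ℤ,
      ENNReal.ofReal ((2 : ℝ) ^ ((j : ℝ) * s)) *
          morreyNorm q μ (fun ξ => φ ((2 : ℝ) ^ (-j) • ξ) • g ξ) =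
        morreyNorm q μ (fun ξ => φ ξ • g ξ)) ∧
    fbmNorm s q μ ⊤ φ g = morreyNorm q μ (fun ξ => φ ξ • g ξ) ∧
    fbmNorm s q μ ⊤ φ g < ⊤ :=
  fbm_contains_homogeneous_general q μ s hq k hk φ hφ g hhom hfin

end
end

section
/- (Uniform-in-time estimate for the fractional Boussinesq–Coriolis–Stratification semigroup.) Let I = (0,∞), 0 ≤ μ < 3, 1 ≤ q < ∞, 1 ≤ r ≤ ∞, s ∈ ℝ, 1/2 ≤ α < 5/2, ν > 0, Ω ≠ 0 and N > 0. Then there is a constant C > 0, independent of Ω and N, such that for every ℂ⁴-valued v₀ ∈ FN^s_{q,μ,r}(ℝ³), ‖S^α_{Ω,N}(·)v₀‖_{𝓛^∞(I;FN^s_{q,μ,r})} ≤ C L ‖v₀‖_{FN^s_{q,μ,r}}, where L = max{2, |Ω|/N, N/|Ω|}. -/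
open MeasureTheory ENNReal

noncomputable section

/-- Chemin–Lerner norm `𝓛¹((0,∞); FN^s_{q,μ,r})`, in terms of the Fourier transform. -/
noncomputable def clNorm1 {n : ℕ} {F : Type*} [NormedAddCommGroup F] [NormedSpace ℝ F]
    (s q μ : ℝ) (r : ℝ≥0∞) (φ : En n → ℝ) (fhat : ℝ → En n → F) : ℝ≥0∞ :=
  lrNorm r fun j : ℤ =>
    ENNReal.ofReal ((2 : ℝ) ^ ((j : ℝ) * s)) *
      ∫⁻ t in Set.Ioi (0 : ℝ), morreyNorm q μ (fun ξ => φ ((2 : ℝ) ^ (-j) • ξ) • fhat t ξ)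

/-- Chemin–Lerner norm `𝓛^∞((0,∞); FN^s_{q,μ,r})`, in terms of the Fourier transform. -/
noncomputable def clNormInf {n : ℕ} {F : Type*} [NormedAddCommGroup F] [NormedSpace ℝ F]
    (s q μ : ℝ) (r : ℝ≥0∞) (φ : En n → ℝ) (fhat : ℝ → En n → F) : ℝ≥0∞ :=
  lrNorm r fun j : ℤ =>
    ENNReal.ofReal ((2 : ℝ) ^ ((j : ℝ) * s)) *
      essSup (fun t => morreyNorm q μ (fun ξ => φ ((2 : ℝ) ^ (-j) • ξ) • fhat t ξ))
        (volume.restrict (Set.Ioi (0 : ℝ)))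

/-- Norm of `X_r = 𝓛^∞(I;FN^s_{q,μ,r}) ∩ 𝓛^1(I;FN^{s+2α}_{q,μ,r})`. -/
noncomputable def xrNorm {n : ℕ} {F : Type*} [NormedAddCommGroup F] [NormedSpace ℝ F]
    (s α q μ : ℝ) (r : ℝ≥0∞) (φ : En n → ℝ) (fhat : ℝ → En n → F) : ℝ≥0∞ :=
  clNormInf s q μ r φ fhat + clNorm1 (s + 2 * α) q μ r φ fhat

/-- `|ξ|' = √(N²ξ₁² + N²ξ₂² + Ω²ξ₃²)`. -/
noncomputable def nxp (Ω N : ℝ) (ξ : En 3) : ℝ :=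
  Real.sqrt (N ^ 2 * (ξ 0) ^ 2 + N ^ 2 * (ξ 1) ^ 2 + Ω ^ 2 * (ξ 2) ^ 2)

noncomputable def M1 (Ω N : ℝ) (ξ : En 3) : Matrix (Fin 4) (Fin 4) ℝ :=
  ((nxp Ω N ξ) ^ 2)⁻¹ •
    !![Ω ^ 2 * (ξ 2) ^ 2, 0, -(N ^ 2 * ξ 0 * ξ 2), Ω * N * ξ 1 * ξ 2;
       0, Ω ^ 2 * (ξ 2) ^ 2, -(N ^ 2 * ξ 1 * ξ 2), -(Ω * N * ξ 0 * ξ 2);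
       -(Ω ^ 2 * ξ 0 * ξ 2), -(Ω ^ 2 * ξ 1 * ξ 2), N ^ 2 * ((ξ 0) ^ 2 + (ξ 1) ^ 2), 0;
       Ω * N * ξ 1 * ξ 2, -(Ω * N * ξ 0 * ξ 2), 0, N ^ 2 * ((ξ 0) ^ 2 + (ξ 1) ^ 2)]

noncomputable def M2 (Ω N : ℝ) (ξ : En 3) : Matrix (Fin 4) (Fin 4) ℝ :=
  (‖ξ‖ * nxp Ω N ξ)⁻¹ •
    !![0, -(Ω * (ξ 2) ^ 2), Ω * ξ 1 * ξ 2, N * ξ 0 * ξ 2;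
       Ω * (ξ 2) ^ 2, 0, -(Ω * ξ 0 * ξ 2), N * ξ 1 * ξ 2;
       -(Ω * ξ 1 * ξ 2), Ω * ξ 0 * ξ 2, 0, -(N * ((ξ 0) ^ 2 + (ξ 1) ^ 2));
       -(N * ξ 0 * ξ 2), -(N * ξ 1 * ξ 2), N * ((ξ 0) ^ 2 + (ξ 1) ^ 2), 0]

noncomputable def M3 (Ω N : ℝ) (ξ : En 3) : Matrix (Fin 4) (Fin 4) ℝ :=
  ((nxp Ω N ξ) ^ 2)⁻¹ •
    !![N ^ 2 * (ξ 1) ^ 2, -(N ^ 2 * ξ 0 * ξ 1), 0, -(Ω * N * ξ 1 * ξ 2);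
       -(N ^ 2 * ξ 0 * ξ 1), N ^ 2 * (ξ 0) ^ 2, 0, Ω * N * ξ 0 * ξ 2;
       0, 0, 0, 0;
       -(Ω * N * ξ 1 * ξ 2), Ω * N * ξ 0 * ξ 2, 0, Ω ^ 2 * (ξ 2) ^ 2]

/-- Fourier symbol of the fractional Boussinesq–Coriolis–Stratification semigroup
`S^α_{Ω,N}(t)`. -/
noncomputable def symS (ν α Ω N t : ℝ) (ξ : En 3) : Matrix (Fin 4) (Fin 4) ℝ :=
  Real.exp (-(ν * t * ‖ξ‖ ^ (2 * α))) •
    (Real.cos (t * nxp Ω N ξ / ‖ξ‖) • M1 Ω N ξ +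
      Real.sin (t * nxp Ω N ξ / ‖ξ‖) • M2 Ω N ξ + M3 Ω N ξ)

/-- Action of `S^α_{Ω,N}(t)` on the Fourier side: `(S(t)v₀)^ = [S(t)]^ v̂₀`. -/
noncomputable def applyS (ν α Ω N t : ℝ) (v0 : En 3 → Fin 4 → ℂ) : En 3 → Fin 4 → ℂ :=
  fun ξ => ((symS ν α Ω N t ξ).map (fun x : ℝ => (x : ℂ))).mulVec (v0 ξ)

/-!
The symbol of `S^α_{Ω,N}(t)` is bounded uniformly in `t ≥ 0` and `ξ`. The heat factor and `cos`,
`sin` are at most `1`. Every entry of `M₂` and `M₃` is at most `1`: in the variables `Nξ₁, Nξ₂, Ωξ₃`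
(and `ξ₁, ξ₂, ξ₃` for `|ξ|`), the square of its numerator is dominated monomial by monomial by the
expanded square of its denominator. The matrix `M₁` is the conjugate by `diag(1, 1, Ω/N, 1)` of a
matrix of the same kind, and this conjugation is what costs the factor `L`. A pointwise bound on
the Fourier side passes to the Morrey norm of every dyadic block, uniformly in `t`, and then to
the `ℓ^r` norm.
-/

open Matrix

lemma nxp_sq (Ω N : ℝ) (ξ : En 3) :
    nxp Ω N ξ ^ 2 = N ^ 2 * ξ 0 ^ 2 + N ^ 2 * ξ 1 ^ 2 + Ω ^ 2 * ξ 2 ^ 2 :=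
  Real.sq_sqrt (by positivity)

lemma norm_sq_eq_fin_three (ξ : En 3) : ‖ξ‖ ^ 2 = ξ 0 ^ 2 + ξ 1 ^ 2 + ξ 2 ^ 2 := by
  simp [EuclideanSpace.norm_sq_eq, Fin.sum_univ_three]

lemma abs_inv_mul_le_of_sq_le {D p K : ℝ} (hD : 0 ≤ D) (hK : 0 ≤ K)
    (h : p ^ 2 ≤ (K * D) ^ 2) : |D⁻¹ * p| ≤ K := by
  have hp : |p| ≤ K * D := abs_le_of_sq_le_sq h (by positivity)
  rcases hD.eq_or_lt with rfl | hD
  · simpa using hK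
  · rwa [abs_mul, abs_inv, abs_of_pos hD, inv_mul_le_iff₀ hD, mul_comm]

lemma abs_M3_apply_le (Ω N : ℝ) (ξ : En 3) (i j : Fin 4) : |M3 Ω N ξ i j| ≤ 1 := by
  rw [M3, Matrix.smul_apply, smul_eq_mul]
  refine abs_inv_mul_le_of_sq_le (sq_nonneg _) zero_le_one ?_
  rw [one_mul, nxp_sq, ← sub_nonneg]
  fin_cases i <;> fin_cases j <;>
    simp only [of_apply, Fin.zero_eta, Fin.mk_one, Fin.reduceFinMk, cons_val] <;>
    ring_nf <;> positivity

lemma abs_M2_apply_le (Ω N : ℝ) (ξ : En 3) (i j : Fin 4) : |M2 Ω N ξ i j| ≤ 1 := by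
  rw [M2, Matrix.smul_apply, smul_eq_mul]
  refine abs_inv_mul_le_of_sq_le (mul_nonneg (norm_nonneg _) (Real.sqrt_nonneg _)) zero_le_one ?_
  rw [one_mul, mul_pow, nxp_sq, norm_sq_eq_fin_three, ← sub_nonneg]
  fin_cases i <;> fin_cases j <;>
    simp only [of_apply, Fin.zero_eta, Fin.mk_one, Fin.reduceFinMk, cons_val] <;>
    ring_nf <;> positivity

def M1Sym (Ω N : ℝ) (ξ : En 3) : Matrix (Fin 4) (Fin 4) ℝ :=
  let a := N * ξ 0
  let b := N * ξ 1
  let c := Ω * ξ 2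
  ((nxp Ω N ξ) ^ 2)⁻¹ •
    !![c ^ 2, 0, -(a * c), b * c;
       0, c ^ 2, -(b * c), -(a * c);
       -(a * c), -(b * c), a ^ 2 + b ^ 2, 0;
       b * c, -(a * c), 0, a ^ 2 + b ^ 2]

def stratScale (Ω N : ℝ) : Fin 4 → ℝ := ![1, 1, Ω / N, 1]

lemma M1_apply_eq (Ω N : ℝ) (hΩ : Ω ≠ 0) (hN : N ≠ 0) (ξ : En 3) (i j : Fin 4) :
    M1 Ω N ξ i j = stratScale Ω N i / stratScale Ω N j * M1Sym Ω N ξ i j := by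
  simp only [M1, M1Sym, Matrix.smul_apply, smul_eq_mul]
  rw [mul_left_comm]
  congr 1
  fin_cases i <;> fin_cases j <;>
    simp only [of_apply, Fin.zero_eta, Fin.mk_one, Fin.reduceFinMk, cons_val, stratScale] <;>
    field_simp <;> ring

lemma abs_stratScale_div_le {Ω N L : ℝ} (hL : 1 ≤ L) (hΩN : |Ω / N| ≤ L) (hNΩ : |N / Ω| ≤ L)
    (i j : Fin 4) : |stratScale Ω N i / stratScale Ω N j| ≤ L := by
  have hself : |Ω / N / (Ω / N)| ≤ L := by
    rw [abs_div]; exact (div_self_le_one _).trans hL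
  fin_cases i <;> fin_cases j <;> simp [stratScale, hL, hΩN, hNΩ, hself]

lemma abs_M1Sym_apply_le (Ω N : ℝ) (ξ : En 3) (i j : Fin 4) : |M1Sym Ω N ξ i j| ≤ 1 := by
  rw [M1Sym, Matrix.smul_apply, smul_eq_mul]
  refine abs_inv_mul_le_of_sq_le (sq_nonneg _) zero_le_one ?_
  rw [one_mul, nxp_sq, ← sub_nonneg]
  fin_cases i <;> fin_cases j <;>
    simp only [of_apply, Fin.zero_eta, Fin.mk_one, Fin.reduceFinMk, cons_val] <;>
    ring_nf <;> positivity

lemma abs_M1_apply_le {Ω N L : ℝ} (hΩ : Ω ≠ 0) (hN : N ≠ 0) (hL : 1 ≤ L)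
    (hΩN : |Ω / N| ≤ L) (hNΩ : |N / Ω| ≤ L) (ξ : En 3) (i j : Fin 4) :
    |M1 Ω N ξ i j| ≤ L := by
  rw [M1_apply_eq Ω N hΩ hN, abs_mul, ← mul_one L]
  exact mul_le_mul (abs_stratScale_div_le hL hΩN hNΩ i j) (abs_M1Sym_apply_le Ω N ξ i j)
    (abs_nonneg _) (by linarith)

lemma abs_symS_apply_le {ν α Ω N L t : ℝ} (hν : 0 ≤ ν) (ht : 0 ≤ t) (hΩ : Ω ≠ 0) (hN : N ≠ 0)
    (hL : 1 ≤ L) (hΩN : |Ω / N| ≤ L) (hNΩ : |N / Ω| ≤ L) (ξ : En 3) (i j : Fin 4) :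
    |symS ν α Ω N t ξ i j| ≤ L + 2 := by
  set θ := t * nxp Ω N ξ / ‖ξ‖
  have hheat : Real.exp (-(ν * t * ‖ξ‖ ^ (2 * α))) ≤ 1 :=
    Real.exp_le_one_iff.2 (neg_nonpos.2 (by positivity))
  simp only [symS, Matrix.smul_apply, Matrix.add_apply, smul_eq_mul]
  rw [abs_mul, Real.abs_exp]
  refine (mul_le_of_le_one_left (abs_nonneg _) hheat).trans ?_
  calc |Real.cos θ * M1 Ω N ξ i j + Real.sin θ * M2 Ω N ξ i j + M3 Ω N ξ i j|
      ≤ |Real.cos θ * M1 Ω N ξ i j| + |Real.sin θ * M2 Ω N ξ i j| + |M3 Ω N ξ i j| :=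
        abs_add_three _ _ _
    _ ≤ 1 * L + 1 * 1 + 1 := by
        rw [abs_mul, abs_mul]
        gcongr
        exacts [Real.abs_cos_le_one θ, abs_M1_apply_le hΩ hN hL hΩN hNΩ ξ i j,
          Real.abs_sin_le_one θ, abs_M2_apply_le Ω N ξ i j, abs_M3_apply_le Ω N ξ i j]
    _ = L + 2 := by ring

lemma norm_map_ofReal_mulVec_le {m n : Type*} [Fintype m] [Fintype n] {K : ℝ} (hK : 0 ≤ K)
    (M : Matrix m n ℝ) (hM : ∀ i j, |M i j| ≤ K) (v : n → ℂ) :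
    ‖(M.map (fun x : ℝ => (x : ℂ))).mulVec v‖ ≤ Fintype.card n * K * ‖v‖ := by
  refine pi_norm_le_iff_of_nonneg (by positivity) |>.2 fun i => ?_
  calc ‖(M.map (fun x : ℝ => (x : ℂ))).mulVec v i‖
      = ‖∑ j, (M i j : ℂ) * v j‖ := rfl
    _ ≤ ∑ j, ‖(M i j : ℂ) * v j‖ := norm_sum_le _ _
    _ ≤ ∑ _j : n, K * ‖v‖ := by
        gcongr with j
        rw [norm_mul, Complex.norm_real, Real.norm_eq_abs]
        exact mul_le_mul (hM i j) (norm_le_pi_norm v j) (norm_nonneg _) hK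
    _ = Fintype.card n * K * ‖v‖ := by simp [mul_assoc]

lemma morreyNorm_le_of_norm_le {n : ℕ} {E F : Type*} [NormedAddCommGroup E]
    [NormedAddCommGroup F] (q μ : ℝ) {f : En n → E} {g : En n → F} {c : ℝ}
    (h : ∀ ξ, ‖f ξ‖ ≤ c * ‖g ξ‖) :
    morreyNorm q μ f ≤ ENNReal.ofReal c * morreyNorm q μ g := by
  simp only [morreyNorm, ENNReal.mul_iSup]
  refine iSup_mono fun x₀ => iSup₂_mono fun d _ => ?_
  rw [mul_left_comm]
  gcongr
  exact eLpNorm_le_mul_eLpNorm_of_ae_le_mul (ae_of_all _ h) _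

lemma lrNorm_mono {r : ℝ≥0∞} {a b : ℤ → ℝ≥0∞} (h : ∀ j, a j ≤ b j) :
    lrNorm r a ≤ lrNorm r b := by
  unfold lrNorm
  split_ifs
  · exact iSup_mono h
  · gcongr with j
    exact h j

lemma lrNorm_const_mul {r : ℝ≥0∞} (hr : r ≠ 0) (c : ℝ≥0∞) (a : ℤ → ℝ≥0∞) :
    lrNorm r (fun j => c * a j) = c * lrNorm r a := by
  unfold lrNorm
  split_ifs with htop
  · exact (ENNReal.mul_iSup c a).symm
  · have hp : 0 < r.toReal := ENNReal.toReal_pos hr htop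
    simp_rw [ENNReal.mul_rpow_of_nonneg _ _ hp.le, ENNReal.tsum_mul_left]
    rw [ENNReal.mul_rpow_of_nonneg _ _ (by positivity), ← ENNReal.rpow_mul,
      mul_one_div_cancel hp.ne', ENNReal.rpow_one]

lemma clNormInf_le_of_norm_le {n : ℕ} {E F : Type*} [NormedAddCommGroup E] [NormedSpace ℝ E]
    [NormedAddCommGroup F] [NormedSpace ℝ F] (s q μ : ℝ) {r : ℝ≥0∞} (hr : r ≠ 0)
    (φ : En n → ℝ) {f : ℝ → En n → E} {g : En n → F} {c : ℝ}
    (h : ∀ t > 0, ∀ ξ, ‖f t ξ‖ ≤ c * ‖g ξ‖) :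
    clNormInf s q μ r φ f ≤ ENNReal.ofReal c * fbmNorm s q μ r φ g := by
  rw [fbmNorm, ← lrNorm_const_mul hr]
  refine lrNorm_mono fun j => ?_
  rw [mul_left_comm]
  gcongr
  refine essSup_le_of_ae_le _ ?_
  filter_upwards [ae_restrict_mem measurableSet_Ioi] with t ht
  refine morreyNorm_le_of_norm_le q μ fun ξ => ?_
  rw [norm_smul, norm_smul, mul_left_comm]
  exact mul_le_mul_of_nonneg_left (h t ht ξ) (norm_nonneg _)

theorem semigroup_uniform_estimate_general (μ q s α : ℝ) (r : ℝ≥0∞)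
    (hr : 1 ≤ r)
    (φ : En 3 → ℝ) :
    ∃ C > (0 : ℝ), ∀ ν > (0 : ℝ), ∀ Ω : ℝ, Ω ≠ 0 → ∀ N > (0 : ℝ),
      ∀ v0 : En 3 → Fin 4 → ℂ, AEStronglyMeasurable v0 volume →
        fbmNorm s q μ r φ v0 < ⊤ →
        clNormInf s q μ r φ (fun t => applyS ν α Ω N t v0) ≤
          ENNReal.ofReal (C * max 2 (max (|Ω| / N) (N / |Ω|))) *
            fbmNorm s q μ r φ v0 := by
  refine ⟨8, by norm_num, fun ν hν Ω hΩ N hN v0 _ _ => ?_⟩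
  set L := max 2 (max (|Ω| / N) (N / |Ω|))
  have hL : 2 ≤ L := le_max_left _ _
  have hΩN : |Ω / N| ≤ L := by
    rw [abs_div, abs_of_pos hN]; exact (le_max_left _ _).trans (le_max_right _ _)
  have hNΩ : |N / Ω| ≤ L := by
    rw [abs_div, abs_of_pos hN]; exact (le_max_right _ _).trans (le_max_right _ _)
  refine clNormInf_le_of_norm_le s q μ (zero_lt_one.trans_le hr).ne' φ fun t ht ξ => ?_
  calc ‖applyS ν α Ω N t v0 ξ‖ ≤ Fintype.card (Fin 4) * (L + 2) * ‖v0 ξ‖ :=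
        norm_map_ofReal_mulVec_le (by linarith) _
          (abs_symS_apply_le hν.le ht.le hΩ hN.ne' (by linarith) hΩN hNΩ ξ) _
    _ ≤ 8 * L * ‖v0 ξ‖ := by
        rw [Fintype.card_fin, Nat.cast_ofNat]
        exact mul_le_mul_of_nonneg_right (by linarith) (norm_nonneg _)

/-- Uniform-in-time estimate for the fractional Boussinesq–Coriolis–Stratification
semigroup: `‖S^α_{Ω,N}(·)v₀‖_{𝓛^∞((0,∞);FN^s_{q,μ,r})} ≤ C L ‖v₀‖_{FN^s_{q,μ,r}}`,
with `C` independent of `Ω` and `N`. -/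
theorem semigroup_uniform_estimate (μ q s α : ℝ) (r : ℝ≥0∞)
    (hμ : 0 ≤ μ) (hμ' : μ < 3) (hq : 1 ≤ q)
    (hr : 1 ≤ r) (hα : 1 / 2 ≤ α) (hα' : α < 5 / 2)
    (φ : En 3 → ℝ) (hφ : IsLP φ) :
    ∃ C > (0 : ℝ), ∀ ν > (0 : ℝ), ∀ Ω : ℝ, Ω ≠ 0 → ∀ N > (0 : ℝ),
      ∀ v0 : En 3 → Fin 4 → ℂ, AEStronglyMeasurable v0 volume →
        fbmNorm s q μ r φ v0 < ⊤ →
        clNormInf s q μ r φ (fun t => applyS ν α Ω N t v0) ≤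
          ENNReal.ofReal (C * max 2 (max (|Ω| / N) (N / |Ω|))) *
            fbmNorm s q μ r φ v0 :=
  semigroup_uniform_estimate_general μ q s α r hr φ

end
end
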